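/- Let s1, s2, s3 be triangle sidelengths, s the semiperimeter, S the Heron area, r = S/s, R = s1*s2*s3/(4S). Then the identity (s-s1)+(s-s2)+(s-s3) = s combined with Δ_i/Ω_i = μ(s-s_i), μ = s1*s2*s3/(2*s*(s-s1)*(s-s2)*(s-s3)), gives Δ_1/Ω_1 + Δ_2/Ω_2 + Δ_3/Ω_3 = 2*R/r. -/

import Mathlib

open Real

-- Both sides are `0` wherever a denominator vanishes (`y / 0 = 0`).
lemma circumellipseArea_div_excircleArea (a b c S x : ℝ) :
    π * a * b * c / (2 * x) / (π * S ^ 2 / x ^ 2) = a * b * c * x / (2 * S ^ 2) := by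
  field_simp

lemma two_mul_circumradius_div_inradius (a b c S s : ℝ) :
    2 * (a * b * c / (4 * S)) / (S / s) = a * b * c * s / (2 * S ^ 2) := by
  field_simp
  ring

theorem stmt_16_general (s1 s2 s3 : ℝ)
    (s S r R : ℝ)
    (hs : s = (s1 + s2 + s3) / 2)
    (hr : r = S / s) (hR : R = s1 * s2 * s3 / (4 * S))
    (Δ1 Δ2 Δ3 Ω1 Ω2 Ω3 : ℝ)
    (hΔ1 : Δ1 = Real.pi * s1 * s2 * s3 / (2 * (s - s1)))
    (hΔ2 : Δ2 = Real.pi * s1 * s2 * s3 / (2 * (s - s2)))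
    (hΔ3 : Δ3 = Real.pi * s1 * s2 * s3 / (2 * (s - s3)))
    (hΩ1 : Ω1 = Real.pi * S^2 / (s - s1)^2) (hΩ2 : Ω2 = Real.pi * S^2 / (s - s2)^2)
    (hΩ3 : Ω3 = Real.pi * S^2 / (s - s3)^2) :
    Δ1 / Ω1 + Δ2 / Ω2 + Δ3 / Ω3 = 2 * R / r := by
  have hsum : (s - s1) + (s - s2) + (s - s3) = s := by rw [hs]; ring
  rw [hΔ1, hΩ1, hΔ2, hΩ2, hΔ3, hΩ3, hR, hr, circumellipseArea_div_excircleArea,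
    circumellipseArea_div_excircleArea, circumellipseArea_div_excircleArea,
    two_mul_circumradius_div_inradius]
  linear_combination s1 * s2 * s3 / (2 * S ^ 2) * hsum

theorem stmt_16 (s1 s2 s3 : ℝ)
    (hs1 : 0 < s1) (hs2 : 0 < s2) (hs3 : 0 < s3)
    (ht1 : s1 < s2 + s3) (ht2 : s2 < s1 + s3) (ht3 : s3 < s1 + s2)
    (s S r R μ : ℝ)
    (hs : s = (s1 + s2 + s3) / 2) (hSpos : 0 < S)
    (hS2 : S^2 = s * (s - s1) * (s - s2) * (s - s3))
    (hr : r = S / s) (hR : R = s1 * s2 * s3 / (4 * S))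
    (hμ : μ = s1 * s2 * s3 / (2 * s * (s - s1) * (s - s2) * (s - s3)))
    (Δ1 Δ2 Δ3 Ω1 Ω2 Ω3 : ℝ)
    (hΔ1 : Δ1 = Real.pi * s1 * s2 * s3 / (2 * (s - s1)))
    (hΔ2 : Δ2 = Real.pi * s1 * s2 * s3 / (2 * (s - s2)))
    (hΔ3 : Δ3 = Real.pi * s1 * s2 * s3 / (2 * (s - s3)))
    (hΩ1 : Ω1 = Real.pi * S^2 / (s - s1)^2) (hΩ2 : Ω2 = Real.pi * S^2 / (s - s2)^2)
    (hΩ3 : Ω3 = Real.pi * S^2 / (s - s3)^2) :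
    Δ1 / Ω1 + Δ2 / Ω2 + Δ3 / Ω3 = 2 * R / r :=
  stmt_16_general s1 s2 s3 s S r R hs hr hR Δ1 Δ2 Δ3 Ω1 Ω2 Ω3 hΔ1 hΔ2 hΔ3 hΩ1 hΩ2 hΩ3
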